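/- arXiv:math/0604202 — 5 statements merged into one kernel-verified Lean document; each statement's English description precedes it below -/
import Mathlib

section
/- Let X be a nonempty finite chain in a partially ordered set S, and let X* = X ∖ {max X}. Then X* is the maximum, in the lexicographic order, of the set of finite chains X' in S satisfying X' < X and max X' < max X. -/
/-- The lexicographic order on finite chains in a poset `S`:
`X ≤ Y` iff `min (Y \ X) ≤ min (X \ Y)`, with the convention `max ∅ < x < min ∅`. -/
def lexLE {S : Type*} [PartialOrder S] [DecidableEq S] (X Y : Finset S) : Prop :=
  X \ Y = ∅ ∨ ∃ b ∈ Y \ X, ∀ a ∈ X \ Y, b ≤ a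

def lexLT {S : Type*} [PartialOrder S] [DecidableEq S] (X Y : Finset S) : Prop :=
  lexLE X Y ∧ ¬ lexLE Y X

open Finset

theorem Finset.sdiff_erase_of_notMem {α : Type*} [DecidableEq α] {s t : Finset α} {a : α}
    (ha : a ∉ s) : s \ t.erase a = s \ t := by
  grind

section

variable {S : Type*} [PartialOrder S] [DecidableEq S]

theorem lexLE_of_subset {X Y : Finset S} (h : X ⊆ Y) : lexLE X Y :=
  Or.inl (sdiff_eq_empty_iff_subset.2 h)

theorem not_lexLE_of_ssubset {X Y : Finset S} (h : X ⊂ Y) : ¬ lexLE Y X := by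
  rintro (hYX | ⟨b, hb, -⟩)
  · exact h.2 (sdiff_eq_empty_iff_subset.1 hYX)
  · rw [sdiff_eq_empty_iff_subset.2 h.1] at hb
    exact notMem_empty b hb

theorem lexLT_of_ssubset {X Y : Finset S} (h : X ⊂ Y) : lexLT X Y :=
  ⟨lexLE_of_subset h.subset, not_lexLE_of_ssubset h⟩

/-- The witness `b ≤ a` of `Y ≤ X` cannot be `m`, since `Y \ X` has an element `a < m`. -/
theorem lexLE_erase_of_lexLE {X Y : Finset S} {m : S} (h : lexLE Y X)
    (hY : ∀ a ∈ Y, a < m) : lexLE Y (X.erase m) := by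
  rw [lexLE, sdiff_erase_of_notMem fun hm => (hY m hm).false]
  rcases h with hYX | ⟨b, hb, hba⟩
  · exact Or.inl hYX
  rcases (Y \ X).eq_empty_or_nonempty with hYX | ⟨a, ha⟩
  · exact Or.inl hYX
  have hbm : b ≠ m := by
    rintro rfl
    exact (hba a ha).not_gt (hY a (mem_sdiff.1 ha).1)
  rw [mem_sdiff] at hb
  exact Or.inr ⟨b, mem_sdiff.2 ⟨mem_erase.2 ⟨hbm, hb.1⟩, hb.2⟩, hba⟩

end

theorem erase_max_is_max_of_smaller_chains_general {S : Type*} [PartialOrder S] [DecidableEq S]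
    (X : Finset S) (m : S) (hm : m ∈ X)
    (hmax : ∀ a ∈ X, a ≤ m) :
    (lexLT (X.erase m) X ∧ ∀ a ∈ X.erase m, a < m) ∧
    (∀ X' : Finset S, IsChain (· ≤ ·) (X' : Set S) → lexLT X' X → (∀ a ∈ X', a < m) →
      lexLE X' (X.erase m)) :=
  ⟨⟨lexLT_of_ssubset (erase_ssubset hm),
      fun a ha => (hmax a (mem_of_mem_erase ha)).lt_of_ne (ne_of_mem_erase ha)⟩,
    fun _ _ hlt hX' => lexLE_erase_of_lexLE hlt.1 hX'⟩

/-- For a nonempty finite chain `X` with maximal element `m`, the chain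
`X* = X \ {max X}` is the maximum (in the lexicographic order) of the set of finite
chains `X'` with `X' < X` and `max X' < max X` (the latter meaning every element of
`X'` is `< m`, with the convention `max ∅ < m`). -/
theorem erase_max_is_max_of_smaller_chains {S : Type*} [PartialOrder S] [DecidableEq S]
    (X : Finset S) (hX : IsChain (· ≤ ·) (X : Set S)) (m : S) (hm : m ∈ X)
    (hmax : ∀ a ∈ X, a ≤ m) :
    (lexLT (X.erase m) X ∧ ∀ a ∈ X.erase m, a < m) ∧
    (∀ X' : Finset S, IsChain (· ≤ ·) (X' : Set S) → lexLT X' X → (∀ a ∈ X', a < m) →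
      lexLE X' (X.erase m)) :=
  erase_max_is_max_of_smaller_chains_general X m hm hmax
end

section
/- Let X, Y be finite chains in a partially ordered set S, with X nonempty, and let X* = X ∖ {max X}. If X* < Y in the lexicographic order and max X ≥ max Y (using the convention that max∅ is below every element), then X ≤ Y in the lexicographic order. -/
theorem lexLT.exists_forall_le {S : Type*} [PartialOrder S] [DecidableEq S] {X Y : Finset S}
    (h : lexLT X Y) : ∃ b ∈ Y \ X, ∀ a ∈ X \ Y, b ≤ a := by
  obtain ⟨hXY | hwitness, hnot⟩ := h
  · obtain ⟨b, hb⟩ := Finset.nonempty_iff_ne_empty.2 fun hYX => hnot (Or.inl hYX)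
    exact ⟨b, hb, by simp [hXY]⟩
  · exact hwitness

theorem lexLE_of_erase_max_lt_general {S : Type*} [PartialOrder S] [DecidableEq S]
    (X Y : Finset S) (m : S) (hmax : ∀ a ∈ X, a ≤ m)
    (h1 : lexLT (X.erase m) Y) (h2 : ∀ b ∈ Y, b ≤ m) :
    lexLE X Y := by
  obtain ⟨b, hb, hb_le⟩ := h1.exists_forall_le
  rw [Finset.mem_sdiff, Finset.mem_erase] at hb
  have mem_erase_sdiff {a : S} (ha : a ∈ X \ Y) (ham : a ≠ m) : a ∈ X.erase m \ Y := by
    rw [Finset.erase_sdiff_comm]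
    exact Finset.mem_erase.2 ⟨ham, ha⟩
  by_cases hbm : b = m
  · subst hbm
    refine Or.inl (Finset.eq_empty_of_forall_notMem fun a ha => ?_)
    have hab : a ≠ b := fun hab => (Finset.mem_sdiff.1 ha).2 (hab ▸ hb.1)
    exact hab (le_antisymm (hmax a (Finset.mem_sdiff.1 ha).1) (hb_le a (mem_erase_sdiff ha hab)))
  · refine Or.inr ⟨b, Finset.mem_sdiff.2 ⟨hb.1, fun hbX => hb.2 ⟨hbm, hbX⟩⟩, fun a ha => ?_⟩
    by_cases ham : a = m
    · exact ham ▸ h2 b hb.1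
    · exact hb_le a (mem_erase_sdiff ha ham)

/-- Let `X`, `Y` be finite chains, `X` nonempty with maximal element `m`, and let
`X* = X \ {max X}`. If `X* < Y` lexicographically and `max X ≥ max Y` (every element
of `Y` is `≤ m`; in particular this holds when `Y = ∅`), then `X ≤ Y`. -/
theorem lexLE_of_erase_max_lt {S : Type*} [PartialOrder S] [DecidableEq S]
    (X Y : Finset S) (hX : IsChain (· ≤ ·) (X : Set S)) (hY : IsChain (· ≤ ·) (Y : Set S))
    (m : S) (hm : m ∈ X) (hmax : ∀ a ∈ X, a ≤ m)
    (h1 : lexLT (X.erase m) Y) (h2 : ∀ b ∈ Y, b ≤ m) :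
    lexLE X Y :=
  lexLE_of_erase_max_lt_general X Y m hmax h1 h2
end

section
/- Uniqueness part of the axiomatic characterization: Let λ : S → T be a length function on a poset S. Suppose μ : S → U and μ' : S → U' are maps into posets both satisfying: (M1) x ≤ y implies μ(x) ≤ μ(y); (M2) μ(x) = μ(y) implies λ(x) = λ(y); (M3) if μ(x') < μ(y) for all x' < x and λ(x) ≥ λ(y), then μ(x) ≤ μ(y). Then for all x, y ∈ S: μ(x) ≤ μ(y) if and only if μ'(x) ≤ μ'(y). -/
def IsLengthFunction {S T : Type*} [PartialOrder S] [PartialOrder T] (l : S → T) : Prop :=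
  (∀ x y : S, x < y → l x < l y) ∧
  (∀ x y : S, l x ≤ l y ∨ l y ≤ l x) ∧
  (∀ x : S, {t : T | ∃ x' ≤ x, l x' = t}.Finite)

/-- The axioms (M1)-(M3) characterizing the Gabriel-Roiter measure associated to a
length function `l` on a poset `S`. -/
def SatisfiesGRAxioms {S T U : Type*} [PartialOrder S] [PartialOrder T] [PartialOrder U]
    (l : S → T) (μ : S → U) : Prop :=
  (∀ x y : S, x ≤ y → μ x ≤ μ y) ∧
  (∀ x y : S, μ x = μ y → l x = l y) ∧
  (∀ x y : S, (∀ x' < x, μ x' < μ y) → l y ≤ l x → μ x ≤ μ y)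

section Aux

variable {S T U U' : Type*} [PartialOrder S] [PartialOrder T] [PartialOrder U] [PartialOrder U']

/-- Height function coming from finiteness axiom (L3). -/
noncomputable def grN (l : S → T) (hl : IsLengthFunction l) (x : S) : ℕ :=
  (hl.2.2 x).toFinset.card

lemma l_mono (l : S → T) (hl : IsLengthFunction l) {x y : S} (h : x ≤ y) : l x ≤ l y := by
  rcases eq_or_lt_of_le h with rfl | h'
  · exact le_rfl
  · exact (hl.1 _ _ h').le

lemma grN_lt (l : S → T) (hl : IsLengthFunction l) {x' x : S} (h : x' < x) :
    grN l hl x' < grN l hl x := by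
  apply Finset.card_lt_card
  have hsub : (hl.2.2 x').toFinset ⊆ (hl.2.2 x).toFinset := by
    intro t ht
    rw [Set.Finite.mem_toFinset] at ht ⊢
    obtain ⟨z, hz, rfl⟩ := ht
    exact ⟨z, hz.trans h.le, rfl⟩
  refine (Finset.ssubset_iff_of_subset hsub).mpr ⟨l x, ?_, ?_⟩
  · rw [Set.Finite.mem_toFinset]; exact ⟨x, le_rfl, rfl⟩
  · rw [Set.Finite.mem_toFinset]
    rintro ⟨z, hz, hlz⟩
    exact (lt_of_le_of_lt (l_mono l hl hz) (hl.1 _ _ h)).ne hlz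

/-- Any map satisfying (M1)-(M3) induces a total relation. -/
lemma gr_total (l : S → T) (hl : IsLengthFunction l) (μ : S → U)
    (hμ : SatisfiesGRAxioms l μ) : ∀ x y : S, μ x ≤ μ y ∨ μ y ≤ μ x := by
  have aux : ∀ x y : S,
      (∀ a b : S, grN l hl a + grN l hl b < grN l hl x + grN l hl y →
        (μ a ≤ μ b ∨ μ b ≤ μ a)) → l y ≤ l x → (μ x ≤ μ y ∨ μ y ≤ μ x) := by
    intro x y IH hyx
    by_cases hc : ∀ x' < x, μ x' < μ y
    · exact Or.inl (hμ.2.2 x y hc hyx)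
    · push_neg at hc
      obtain ⟨x', hx', hnlt⟩ := hc
      have hsum : grN l hl x' + grN l hl y < grN l hl x + grN l hl y := by
        have := grN_lt l hl hx'; omega
      rcases IH x' y hsum with h | h
      · have : μ x' = μ y := le_antisymm h (by
          by_contra hne
          exact hnlt (lt_of_le_of_ne h (fun he => hne he.ge)))
        exact Or.inr (this ▸ (hμ.1 x' x hx'.le) : μ y ≤ μ x)
      · exact Or.inr (h.trans (hμ.1 x' x hx'.le))
  have key : ∀ N : ℕ, ∀ x y : S, grN l hl x + grN l hl y ≤ N → (μ x ≤ μ y ∨ μ y ≤ μ x) := by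
    intro N
    induction N using Nat.strong_induction_on with
    | _ N IH =>
      intro x y hN
      have IH' : ∀ a b : S, grN l hl a + grN l hl b < grN l hl x + grN l hl y →
          (μ a ≤ μ b ∨ μ b ≤ μ a) := by
        intro a b hab
        rcases Nat.lt_or_ge N 1 with h | h
        · omega
        · exact IH (N - 1) (by omega) a b (by omega)
      rcases hl.2.1 x y with h | h
      · have IH'' : ∀ a b : S, grN l hl a + grN l hl b < grN l hl y + grN l hl x →
            (μ a ≤ μ b ∨ μ b ≤ μ a) := by
          intro a b hab; exact IH' a b (by omega)
        exact (aux y x IH'' h).symm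
      · exact aux x y IH' h
  intro x y
  exact key _ x y le_rfl

/-- The inductive step of the uniqueness theorem. -/
lemma gr_step (l : S → T) (hl : IsLengthFunction l)
    (μ : S → U) (hμ : SatisfiesGRAxioms l μ)
    (μ' : S → U') (hμ' : SatisfiesGRAxioms l μ')
    (x y : S)
    (IH : ∀ a b : S, grN l hl a + grN l hl b < grN l hl x + grN l hl y →
      (μ a ≤ μ b ↔ μ' a ≤ μ' b))
    (hxy : μ x ≤ μ y) : μ' x ≤ μ' y := by
  by_cases hyx : l y ≤ l x
  · -- Case A: apply (M3) for μ'
    apply hμ'.2.2 x y _ hyx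
    intro x' hx'
    have hmlt : μ x' < μ y := by
      refine lt_of_lt_of_le ?_ hxy
      refine lt_of_le_of_ne (hμ.1 x' x hx'.le) (fun he => ?_)
      exact (hl.1 _ _ hx').ne (hμ.2.1 _ _ he)
    have hsum : grN l hl x' + grN l hl y < grN l hl x + grN l hl y := by
      have := grN_lt l hl hx'; omega
    have h1 : μ' x' ≤ μ' y := (IH x' y hsum).mp hmlt.le
    refine lt_of_le_of_ne h1 (fun he => ?_)
    have hsum' : grN l hl y + grN l hl x' < grN l hl x + grN l hl y := by
      have := grN_lt l hl hx'; omega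
    have : μ y ≤ μ x' := (IH y x' hsum').mpr he.ge
    exact hmlt.not_ge this
  · -- Case B: l x < l y
    have hxy' : l x < l y := by
      rcases hl.2.1 x y with h | h
      · exact lt_of_le_not_ge h hyx
      · exact absurd h hyx
    by_cases hex : ∃ y' < y, μ x ≤ μ y'
    · obtain ⟨y', hy', hm⟩ := hex
      have hsum : grN l hl x + grN l hl y' < grN l hl x + grN l hl y := by
        have := grN_lt l hl hy'; omega
      exact ((IH x y' hsum).mp hm).trans (hμ'.1 y' y hy'.le)
    · exfalso
      push_neg at hex
      have hall : ∀ y' < y, μ y' < μ x := by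
        intro y' hy'
        rcases gr_total l hl μ hμ y' x with h | h
        · exact lt_of_le_of_ne h (fun he => hex y' hy' he.ge)
        · exact absurd h (hex y' hy')
      have : μ y ≤ μ x := hμ.2.2 y x hall hxy'.le
      have heq : μ x = μ y := le_antisymm hxy this
      exact hxy'.ne (hμ.2.1 _ _ heq)

end Aux

/-- Uniqueness in the axiomatic characterization: any two maps into posets satisfying
(M1)-(M3) for the same length function `l` induce the same order relation on `S`. -/
theorem grAxioms_unique {S T U U' : Type*} [PartialOrder S] [PartialOrder T]
    [PartialOrder U] [PartialOrder U']
    (l : S → T) (hl : IsLengthFunction l)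
    (μ : S → U) (hμ : SatisfiesGRAxioms l μ)
    (μ' : S → U') (hμ' : SatisfiesGRAxioms l μ') :
    ∀ x y : S, μ x ≤ μ y ↔ μ' x ≤ μ' y := by
  have key : ∀ N : ℕ, ∀ x y : S, grN l hl x + grN l hl y ≤ N → (μ x ≤ μ y ↔ μ' x ≤ μ' y) := by
    intro N
    induction N using Nat.strong_induction_on with
    | _ N IH =>
      intro x y hN
      have IH' : ∀ a b : S, grN l hl a + grN l hl b < grN l hl x + grN l hl y →
          (μ a ≤ μ b ↔ μ' a ≤ μ' b) := by
        intro a b hab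
        exact IH (grN l hl a + grN l hl b) (by omega) a b le_rfl
      constructor
      · exact gr_step l hl μ hμ μ' hμ' x y IH'
      · exact gr_step l hl μ' hμ' μ hμ x y (fun a b h => (IH' a b h).symm)
  intro x y
  exact key _ x y le_rfl
end

section
/- Totality from the axioms: Let λ : S → T be a length function and μ : S → U a map into a poset satisfying (M1) x ≤ y implies μ(x) ≤ μ(y); (M2) μ(x) = μ(y) implies λ(x) = λ(y); (M3) if μ(x') < μ(y) for all x' < x and λ(x) ≥ λ(y), then μ(x) ≤ μ(y). Then μ(x) and μ(y) are comparable for all x, y ∈ S, and {μ(x') | x' ≤ x} is finite for each x ∈ S; hence μ is a length function on S. -/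
/-- Any map `μ` satisfying (M1)-(M3) for a length function `l` has pairwise comparable
values and locally finitely many values; together with strict monotonicity this makes
`μ` itself a length function. -/
theorem grAxioms_isLengthFunction {S T U : Type*} [PartialOrder S] [PartialOrder T]
    [PartialOrder U] (l : S → T) (hl : IsLengthFunction l)
    (μ : S → U) (hμ : SatisfiesGRAxioms l μ) :
    (∀ x y : S, x < y → μ x < μ y) ∧
    (∀ x y : S, μ x ≤ μ y ∨ μ y ≤ μ x) ∧
    (∀ x : S, {u : U | ∃ x' ≤ x, μ x' = u}.Finite) := by
  classical
  obtain ⟨hl1, hl2, hl3⟩ := hl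
  obtain ⟨hm1, hm2, hm3⟩ := hμ
  -- `<` on `S` is well-founded: the cardinality of the (finite) set of `l`-values below
  -- an element is a strictly monotone ℕ-valued function.
  have hc : ∀ x y : S, x < y → (hl3 x).toFinset.card < (hl3 y).toFinset.card := by
    intro x y hxy
    apply Finset.card_lt_card
    rw [Set.Finite.toFinset_ssubset_toFinset]
    have hsub : {t : T | ∃ x' ≤ x, l x' = t} ⊆ {t : T | ∃ x' ≤ y, l x' = t} := by
      rintro t ⟨x', hx', rfl⟩
      exact ⟨x', hx'.trans hxy.le, rfl⟩
    refine (Set.ssubset_iff_of_subset hsub).mpr ⟨l y, ⟨y, le_rfl, rfl⟩, ?_⟩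
    rintro ⟨x', hx', he⟩
    exact absurd he (ne_of_lt (hl1 x' y (lt_of_le_of_lt hx' hxy)))
  have wf : WellFounded ((· < ·) : S → S → Prop) :=
    Subrelation.wf (fun {x y} h => hc x y h)
      (InvImage.wf (fun s => (hl3 s).toFinset.card) (wellFounded_lt))
  -- strict monotonicity of μ
  have mono : ∀ x y : S, x < y → μ x < μ y := by
    intro x y h
    refine lt_of_le_of_ne (hm1 _ _ h.le) ?_
    intro he
    exact absurd (hm2 _ _ he) (ne_of_lt (hl1 _ _ h))
  -- comparability
  have comp : ∀ x y : S, μ x ≤ μ y ∨ μ y ≤ μ x := by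
    intro x
    refine wf.induction (C := fun x => ∀ y, μ x ≤ μ y ∨ μ y ≤ μ x) x ?_
    intro x IHx y
    refine wf.induction (C := fun y => μ x ≤ μ y ∨ μ y ≤ μ x) y ?_
    intro y IHy
    rcases hl2 y x with h | h
    · by_cases hall : ∀ x' < x, μ x' < μ y
      · exact Or.inl (hm3 x y hall h)
      · push_neg at hall
        obtain ⟨x', hx', hnot⟩ := hall
        rcases IHx x' hx' y with h1 | h1
        · rcases h1.lt_or_eq with h2 | h2
          · exact absurd h2 hnot
          · exact Or.inr (h2 ▸ hm1 x' x hx'.le)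
        · exact Or.inr (h1.trans (hm1 x' x hx'.le))
    · by_cases hall : ∀ y' < y, μ y' < μ x
      · exact Or.inr (hm3 y x hall h)
      · push_neg at hall
        obtain ⟨y', hy', hnot⟩ := hall
        rcases IHy y' hy' with h1 | h1
        · exact Or.inl (h1.trans (hm1 y' y hy'.le))
        · rcases h1.lt_or_eq with h2 | h2
          · exact absurd h2 hnot
          · exact Or.inl (h2 ▸ hm1 y' y hy'.le)
  -- Lemma A: contrapositive of (M3) plus comparability
  have lemA : ∀ a b : S, l a ≤ l b → μ a < μ b → ∃ b', b' < b ∧ μ a ≤ μ b' := by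
    intro a b hle hlt
    by_contra hcon
    push_neg at hcon
    have hall : ∀ b' < b, μ b' < μ a := by
      intro b' hb'
      rcases comp b' a with h | h
      · rcases h.lt_or_eq with h2 | h2
        · exact h2
        · exact absurd (le_of_eq h2.symm) (hcon b' hb')
      · exact absurd h (hcon b' hb')
    exact absurd (hm3 b a hall hle) (not_le_of_gt hlt)
  refine ⟨mono, comp, ?_⟩
  intro x
  set Λ : Finset T := (hl3 x).toFinset with hΛdef
  set W : T → Set U := fun t => {u | ∃ a, a ≤ x ∧ l a = t ∧ μ a = u} with hWdef
  have key : ∀ n : ℕ, ∀ t : T, (Λ.filter (fun t' => t' < t)).card = n → (W t).Finite := by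
    intro n
    induction n using Nat.strong_induction_on with
    | _ n IH =>
      intro t hcard
      -- the union of W over strictly smaller l-values is finite
      set F : Set U := ⋃ t' ∈ Λ.filter (fun t'' => t'' < t), W t' with hFdef
      have hFfin : F.Finite := by
        refine Set.Finite.biUnion (Λ.filter (fun t'' => t'' < t)).finite_toSet ?_
        intro t' ht'
        rw [Finset.mem_coe, Finset.mem_filter] at ht'
        refine IH _ ?_ t' rfl
        rw [← hcard]
        apply Finset.card_lt_card
        refine Finset.ssubset_iff_of_subset ?_ |>.mpr ?_
        · intro s hs
          rw [Finset.mem_filter] at hs ⊢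
          exact ⟨hs.1, hs.2.trans ht'.2⟩
        · exact ⟨t', Finset.mem_filter.mpr ⟨ht'.1, ht'.2⟩, by simp⟩
      -- between any two elements of W t there is an element of F
      have between : ∀ v w, v ∈ W t → w ∈ W t → v < w → ∃ u ∈ F, v ≤ u ∧ u < w := by
        rintro v w ⟨a, ha, hla, rfl⟩ ⟨b, hb, hlb, rfl⟩ hvw
        obtain ⟨b', hb'b, hub⟩ := lemA a b (by rw [hla, hlb]) hvw
        refine ⟨μ b', ?_, hub, mono b' b hb'b⟩
        rw [hFdef]
        simp only [Set.mem_iUnion]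
        refine ⟨l b', ?_, b', hb'b.le.trans hb, rfl, rfl⟩
        rw [Finset.mem_filter]
        refine ⟨?_, hlb ▸ hl1 b' b hb'b⟩
        rw [hΛdef, Set.Finite.mem_toFinset]
        exact ⟨b', hb'b.le.trans hb, rfl⟩
      -- the set of non-minimal elements of W t
      set D : Set U := {w ∈ W t | ∃ v ∈ W t, v < w} with hDdef
      have hWchain : ∀ u u', u ∈ W t → u' ∈ W t → u ≤ u' ∨ u' ≤ u := by
        rintro u u' ⟨a, _, _, rfl⟩ ⟨b, _, _, rfl⟩
        exact comp a b
      have hFchain : ∀ u u', u ∈ F → u' ∈ F → u ≤ u' ∨ u' ≤ u := by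
        rintro u u' hu hu'
        rw [hFdef] at hu hu'
        simp only [Set.mem_iUnion] at hu hu'
        obtain ⟨t1, _, a, _, _, rfl⟩ := hu
        obtain ⟨t2, _, b, _, _, rfl⟩ := hu'
        exact comp a b
      -- every element of D has a greatest F-element strictly below it
      have hchoice : ∀ w ∈ D, ∃ g, g ∈ F ∧ g < w ∧ ∀ u ∈ F, u < w → u ≤ g := by
        rintro w ⟨hw, v, hv, hvw⟩
        obtain ⟨u0, hu0F, _, hu0w⟩ := between v w hv hw hvw
        have hGfin : {u ∈ F | u < w}.Finite := hFfin.subset (fun u hu => hu.1)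
        obtain ⟨g, hg, hgmax⟩ := hGfin.exists_maximal ⟨u0, hu0F, hu0w⟩
        refine ⟨g, hg.1, hg.2, ?_⟩
        intro u hu huw
        rcases hFchain u g hu hg.1 with h | h
        · exact h
        · exact hgmax ⟨hu, huw⟩ h
      choose! g hg1 hg2 hg3 using hchoice
      have hkey : ∀ a b, a ∈ D → b ∈ D → a < b → g a < g b := by
        intro a b ha hb hab
        obtain ⟨u, huF, hau, hub⟩ := between a b ha.1 hb.1 hab
        have h3 : u ≤ g b := hg3 b hb u huF hub
        have h4 : g a < a := hg2 a ha
        exact lt_of_lt_of_le h4 (le_trans hau h3)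
      have hinj : Set.InjOn g D := by
        intro w1 h1 w2 h2 he
        by_contra hne
        rcases hWchain w1 w2 h1.1 h2.1 with h | h
        · rcases h.lt_or_eq with h' | h'
          · exact absurd he (ne_of_lt (hkey w1 w2 h1 h2 h'))
          · exact hne h'
        · rcases h.lt_or_eq with h' | h'
          · exact absurd he.symm (ne_of_lt (hkey w2 w1 h2 h1 h'))
          · exact hne h'.symm
      have hDfin : D.Finite := by
        refine Set.Finite.of_finite_image ?_ hinj
        refine hFfin.subset ?_
        rintro _ ⟨w, hw, rfl⟩
        exact hg1 w hw
      -- W t \ D is a subsingleton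
      have hmin : (W t \ D).Subsingleton := by
        intro w1 hw1 w2 hw2
        by_contra hne
        rcases hWchain w1 w2 hw1.1 hw2.1 with h | h
        · rcases h.lt_or_eq with h' | h'
          · exact hw2.2 ⟨hw2.1, w1, hw1.1, h'⟩
          · exact hne h'
        · rcases h.lt_or_eq with h' | h'
          · exact hw1.2 ⟨hw1.1, w2, hw2.1, h'⟩
          · exact hne h'.symm
      refine Set.Finite.subset (hDfin.union hmin.finite) ?_
      intro w hw
      by_cases hwD : w ∈ D
      · exact Or.inl hwD
      · exact Or.inr ⟨hw, hwD⟩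
  refine Set.Finite.subset (Set.Finite.biUnion Λ.finite_toSet (fun t _ => key _ t rfl)) ?_
  rintro u ⟨x', hx', rfl⟩
  simp only [Set.mem_iUnion]
  refine ⟨l x', ?_, x', hx', rfl, rfl⟩
  rw [Finset.mem_coe, hΛdef, Set.Finite.mem_toFinset]
  exact ⟨x', hx', rfl⟩
end

section
/- Let λ : S → T be a length function and μ : S → U a map satisfying the axioms (M1)-(M3) of the Gabriel-Roiter measure. Then for all x, y ∈ S: μ(x) = μ(y) if and only if max_{x'<x} μ(x') = max_{y'<y} μ(y') and λ(x) = λ(y) (where the maxima exist in U, with the convention that both maxima over empty sets are considered equal). -/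
section

variable {S T U : Type*} [PartialOrder S] [PartialOrder T] [PartialOrder U]
  {l : S → T} {μ : S → U}

namespace IsLengthFunction

theorem strictMono (hl : IsLengthFunction l) : StrictMono l :=
  fun x y => hl.1 x y

theorem image_Iic_ssubset (hl : IsLengthFunction l) {a b : S} (hab : a < b) :
    l '' Set.Iic a ⊂ l '' Set.Iic b := by
  refine Set.ssubset_iff_subset_ne.mpr
    ⟨Set.image_mono (Set.Iic_subset_Iic.mpr hab.le), fun heq => ?_⟩
  obtain ⟨c, hca, hcb⟩ : l b ∈ l '' Set.Iic a := heq ▸ Set.mem_image_of_mem l le_rfl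
  exact (hl.strictMono.monotone hca).not_gt (hcb ▸ hl.strictMono hab)

/-- Counting the values of `l` below a point is a strictly monotone map to `ℕ`. -/
theorem wellFoundedLT (hl : IsLengthFunction l) : WellFoundedLT S :=
  StrictMono.wellFoundedLT (f := fun a => (l '' Set.Iic a).ncard)
    fun _ b hab => Set.ncard_lt_ncard (hl.image_Iic_ssubset hab) (hl.2.2 b)

end IsLengthFunction

namespace SatisfiesGRAxioms

theorem monotone (hμ : SatisfiesGRAxioms l μ) : Monotone μ :=
  fun x y => hμ.1 x y

theorem length_eq (hμ : SatisfiesGRAxioms l μ) {x y : S} (h : μ x = μ y) : l x = l y :=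
  hμ.2.1 x y h

theorem le_of_forall_lt (hμ : SatisfiesGRAxioms l μ) {x y : S} (h : ∀ x' < x, μ x' < μ y)
    (hlyx : l y ≤ l x) : μ x ≤ μ y :=
  hμ.2.2 x y h hlyx

theorem lt_of_le_of_length_eq (hl : StrictMono l) (hμ : SatisfiesGRAxioms l μ)
    {x' x y : S} (hx' : x' < x) (hlxy : l x = l y) (hle : μ x' ≤ μ y) : μ x' < μ y :=
  hle.lt_of_ne fun heq => (hl hx').ne ((hμ.length_eq heq).trans hlxy.symm)

theorem le_or_le_of_length_le (hμ : SatisfiesGRAxioms l μ) {a b : S} (hlba : l b ≤ l a)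
    (hcomp : ∀ a' < a, μ a' ≤ μ b ∨ μ b ≤ μ a') : μ a ≤ μ b ∨ μ b ≤ μ a := by
  by_cases hbelow : ∃ a' < a, μ b ≤ μ a'
  · obtain ⟨a', ha', hba'⟩ := hbelow
    exact Or.inr (hba'.trans (hμ.monotone ha'.le))
  · push Not at hbelow
    refine Or.inl (hμ.le_of_forall_lt (fun a' ha' => ?_) hlba)
    exact ((hcomp a' ha').resolve_right (hbelow a' ha')).lt_of_not_ge (hbelow a' ha')

theorem le_total (hl : IsLengthFunction l) (hμ : SatisfiesGRAxioms l μ) (a b : S) :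
    μ a ≤ μ b ∨ μ b ≤ μ a := by
  have := hl.wellFoundedLT
  induction a using WellFoundedLT.induction generalizing b with
  | _ a iha =>
    induction b using WellFoundedLT.induction with
    | _ b ihb =>
      rcases hl.2.1 b a with hlba | hlab
      · exact hμ.le_or_le_of_length_le hlba fun a' ha' => iha a' ha' b
      · exact (hμ.le_or_le_of_length_le hlab fun b' hb' => (ihb b' hb').symm).symm

theorem exists_lt_le_of_eq (hl : IsLengthFunction l) (hμ : SatisfiesGRAxioms l μ)
    {x y x' : S} (hxy : μ x = μ y) (hx' : x' < x) : ∃ y' < y, μ x' ≤ μ y' := by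
  by_contra! hbelow
  have hyx' : μ y ≤ μ x' := by
    refine hμ.le_of_forall_lt (fun y' hy' => ?_) ((hl.strictMono hx').trans_eq (hμ.length_eq hxy)).le
    exact ((hμ.le_total hl y' x').resolve_right (hbelow y' hy')).lt_of_not_ge (hbelow y' hy')
  exact (hμ.lt_of_le_of_length_eq hl.strictMono hx' rfl (hμ.monotone hx'.le)).not_ge
    (hxy ▸ hyx')

theorem le_of_cofinal (hl : StrictMono l) (hμ : SatisfiesGRAxioms l μ) {x y : S}
    (hcof : ∀ x' < x, ∃ y' < y, μ x' ≤ μ y') (hlxy : l x = l y) : μ x ≤ μ y := by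
  refine hμ.le_of_forall_lt (fun x' hx' => ?_) hlxy.ge
  obtain ⟨y', hy', hle⟩ := hcof x' hx'
  exact hμ.lt_of_le_of_length_eq hl hx' hlxy (hle.trans (hμ.monotone hy'.le))

end SatisfiesGRAxioms

end

/-- For `μ` satisfying (M1)-(M3): `μ(x) = μ(y)` iff `max_{x'<x} μ(x') = max_{y'<y} μ(y')`
and `l(x) = l(y)`. The equality of the maxima (with empty maxima considered equal) is
expressed by mutual cofinality of the sets of values `{μ x' | x' < x}` and
`{μ y' | y' < y}`, which form finite chains. -/
theorem grAxioms_eq_iff {S T U : Type*} [PartialOrder S] [PartialOrder T]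
    [PartialOrder U] (l : S → T) (hl : IsLengthFunction l)
    (μ : S → U) (hμ : SatisfiesGRAxioms l μ) :
    ∀ x y : S, μ x = μ y ↔
      (((∀ x' < x, ∃ y' < y, μ x' ≤ μ y') ∧ (∀ y' < y, ∃ x' < x, μ y' ≤ μ x')) ∧
        l x = l y) := by
  intro x y
  constructor
  · intro hxy
    exact ⟨⟨fun _ => hμ.exists_lt_le_of_eq hl hxy, fun _ => hμ.exists_lt_le_of_eq hl hxy.symm⟩,
      hμ.length_eq hxy⟩
  · rintro ⟨⟨hxy, hyx⟩, hlxy⟩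
    exact (hμ.le_of_cofinal hl.strictMono hxy hlxy).antisymm
      (hμ.le_of_cofinal hl.strictMono hyx hlxy.symm)
end
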